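/- Let M, N be positive natural numbers and let d be a dataset of N instances with M binary protected attributes and a binary label. Suppose every vertex (level-0 hypercube) contains at least one instance, i.e. N(v) > 0 for every v : Fin M → Bool. Then the minimum success rate per level, SR_min(K) = min over all hypercubes x of level K of SR(x), is a monotonically increasing function of K: for every K with 1 ≤ K ≤ M, SR_min(K-1) ≤ SR_min(K). -/

import Mathlib

/-- An attribute vector `v` belongs to the hypercube `x` if it matches all specified coordinates. -/
def Belongs {M : ℕ} (x : Fin M → Option Bool) (v : Fin M → Bool) : Prop :=
  ∀ i : Fin M, ∀ b : Bool, x i = some b → v i = b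

instance {M : ℕ} (x : Fin M → Option Bool) (v : Fin M → Bool) : Decidable (Belongs x v) := by
  unfold Belongs; infer_instance

/-- The level of a hypercube: the number of its stars (unspecified coordinates). -/
def level {M : ℕ} (x : Fin M → Option Bool) : ℕ :=
  (Finset.univ.filter fun i => x i = none).card

/-- `cnt d x` = N(x): the number of instances of the dataset `d` belonging to `x`. -/
def cnt {M N : ℕ} (d : Fin N → (Fin M → Bool) × Bool) (x : Fin M → Option Bool) : ℕ :=
  (Finset.univ.filter fun n => Belongs x (d n).1).card

/-- `cnt1 d x` = N¹(x): the number of instances belonging to `x` with label `true`. -/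
def cnt1 {M N : ℕ} (d : Fin N → (Fin M → Bool) × Bool) (x : Fin M → Option Bool) : ℕ :=
  (Finset.univ.filter fun n => Belongs x (d n).1 ∧ (d n).2 = true).card

/-- The success rate SR(x) = N¹(x)/N(x). -/
def SR {M N : ℕ} (d : Fin N → (Fin M → Bool) × Bool) (x : Fin M → Option Bool) : ℚ :=
  (cnt1 d x : ℚ) / (cnt d x : ℚ)

/-- The finset of all hypercubes of level `K`. -/
def levelSet (M K : ℕ) : Finset (Fin M → Option Bool) :=
  Finset.univ.filter fun x => level x = K

/-- SR_min(K): minimum success rate over all hypercubes of level `K`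
(the level set is nonempty whenever `K ≤ M`, so the junk value `0` is never used there). -/
def SRmin {M N : ℕ} (d : Fin N → (Fin M → Bool) × Bool) (K : ℕ) : ℚ :=
  WithTop.untopD 0 (((levelSet M K).image (SR d)).min)

/-- SR_max(K): maximum success rate over all hypercubes of level `K`. -/
def SRmax {M N : ℕ} (d : Fin N → (Fin M → Bool) × Bool) (K : ℕ) : ℚ :=
  WithBot.unbotD 0 (((levelSet M K).image (SR d)).max)

/-! A minimiser `x` of `SR` at level `K` has a star `i`. Fixing `i` to `false` and to `true` splits
the instances of `x` between two hypercubes of level `K - 1`, both nonempty because every vertex is,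
so `SR x` is the mediant of their success rates and hence at least `SRmin d (K - 1)`. -/

open Finset

theorem le_add_div_add {α : Type*} [Field α] [LinearOrder α] [IsStrictOrderedRing α]
    {m a b c d : α} (hb : 0 < b) (hd : 0 < d) (hab : m ≤ a / b) (hcd : m ≤ c / d) :
    m ≤ (a + c) / (b + d) := by
  rw [le_div_iff₀ hb] at hab
  rw [le_div_iff₀ hd] at hcd
  rw [le_div_iff₀ (add_pos hb hd)]
  linarith

section Hypercube

variable {M : ℕ}

theorem belongs_getD (x : Fin M → Option Bool) (b : Bool) :
    Belongs x (fun i => (x i).getD b) := by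
  intro i c hi
  simp [hi]

theorem belongs_vertex_iff (v w : Fin M → Bool) : Belongs (fun i => some (v i)) w ↔ w = v := by
  simp [Belongs, funext_iff]

theorem belongs_update_some_iff {x : Fin M → Option Bool} {i : Fin M} (hi : x i = none)
    (b : Bool) (v : Fin M → Bool) :
    Belongs (Function.update x i (some b)) v ↔ Belongs x v ∧ v i = b := by
  constructor
  · intro h
    refine ⟨fun j c hj => h j c ?_, h i b (Function.update_self ..)⟩
    rwa [Function.update_of_ne (by rintro rfl; simp [hi] at hj)]
  · rintro ⟨h, rfl⟩ j c hj
    by_cases hji : j = i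
    · subst hji
      simpa using hj
    · exact h j c (by rwa [Function.update_of_ne hji] at hj)

theorem level_update_some {x : Fin M → Option Bool} {i : Fin M} (hi : x i = none) (b : Bool) :
    level (Function.update x i (some b)) = level x - 1 := by
  have : univ.filter (fun j => Function.update x i (some b) j = none)
      = (univ.filter fun j => x j = none).erase i := by
    ext j
    by_cases hji : j = i <;> simp [hji]
  rw [level, this, card_erase_of_mem (by simpa using hi), level]

theorem mem_levelSet {K : ℕ} {x : Fin M → Option Bool} :
    x ∈ levelSet M K ↔ level x = K := by
  simp [levelSet]

theorem exists_star_of_level_pos {x : Fin M → Option Bool} (hx : 0 < level x) :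
    ∃ i, x i = none := by
  simpa [level, card_pos, filter_nonempty_iff] using hx

theorem levelSet_nonempty {K : ℕ} (hK : K ≤ M) : (levelSet M K).Nonempty := by
  refine ⟨fun i => if (i : ℕ) < K then none else some false, ?_⟩
  have : univ.filter (fun i : Fin M => (if (i : ℕ) < K then none else some false) = none)
      = univ.filter (fun i : Fin M => (i : ℕ) < K) := by
    ext i
    by_cases h : (i : ℕ) < K <;> simp [h]
  rw [mem_levelSet, level, this, Fin.card_filter_val_lt, min_eq_right hK]

theorem card_filter_belongs_eq_add {α : Type*} (s : Finset α) (f : α → Fin M → Bool)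
    {x : Fin M → Option Bool} {i : Fin M} (hi : x i = none) :
    #{a ∈ s | Belongs x (f a)} = #{a ∈ s | Belongs (Function.update x i (some false)) (f a)}
      + #{a ∈ s | Belongs (Function.update x i (some true)) (f a)} := by
  simp only [belongs_update_some_iff hi, ← filter_filter]
  rw [← card_filter_add_card_filter_not (s := {a ∈ s | Belongs x (f a)})
    (fun a => f a i = false)]
  simp only [Bool.not_eq_false]

end Hypercube

section Dataset

variable {M N : ℕ} (d : Fin N → (Fin M → Bool) × Bool)

theorem cnt_le_cnt {x y : Fin M → Option Bool} (h : ∀ v, Belongs y v → Belongs x v) :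
    cnt d y ≤ cnt d x :=
  card_le_card fun n hn => by simp only [mem_filter] at hn ⊢; exact ⟨hn.1, h _ hn.2⟩

theorem cnt_pos (hvert : ∀ v : Fin M → Bool, 0 < cnt d (fun i => some (v i)))
    (x : Fin M → Option Bool) : 0 < cnt d x :=
  (hvert _).trans_le <|
    cnt_le_cnt d fun _ hv => (belongs_vertex_iff _ _).1 hv ▸ belongs_getD x false

theorem cnt_eq_add {x : Fin M → Option Bool} {i : Fin M} (hi : x i = none) :
    cnt d x = cnt d (Function.update x i (some false)) + cnt d (Function.update x i (some true)) :=
  card_filter_belongs_eq_add _ _ hi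

theorem cnt1_eq_add {x : Fin M → Option Bool} {i : Fin M} (hi : x i = none) :
    cnt1 d x
      = cnt1 d (Function.update x i (some false)) + cnt1 d (Function.update x i (some true)) := by
  have hcnt1 (y : Fin M → Option Bool) :
      cnt1 d y = #{n ∈ {n | (d n).2 = true} | Belongs y (d n).1} := by
    simp only [cnt1, filter_filter, and_comm]
  simp only [hcnt1]
  exact card_filter_belongs_eq_add _ _ hi

theorem le_SR_of_le_SR_update {x : Fin M → Option Bool} {i : Fin M} (hi : x i = none) {m : ℚ}
    (hpos : ∀ b : Bool, 0 < cnt d (Function.update x i (some b)))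
    (hm : ∀ b : Bool, m ≤ SR d (Function.update x i (some b))) : m ≤ SR d x := by
  rw [SR, cnt_eq_add d hi, cnt1_eq_add d hi]
  push_cast
  exact le_add_div_add (by exact_mod_cast hpos false) (by exact_mod_cast hpos true)
    (hm false) (hm true)

theorem SRmin_eq_inf' {K : ℕ} (hK : K ≤ M) :
    SRmin d K = (levelSet M K).inf' (levelSet_nonempty hK) (SR d) := by
  rw [SRmin, min_eq_inf_withTop, inf_image, ← coe_inf' (levelSet_nonempty hK)]
  rfl

end Dataset

theorem SRmin_mono_general (M N : ℕ)
    (d : Fin N → (Fin M → Bool) × Bool)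
    (hvert : ∀ v : Fin M → Bool, 0 < cnt d (fun i => some (v i)))
    (K : ℕ) (hK1 : 1 ≤ K) (hKM : K ≤ M) :
    SRmin d (K - 1) ≤ SRmin d K := by
  obtain ⟨x, hx, hxmin⟩ := exists_mem_eq_inf' (levelSet_nonempty hKM) (SR d)
  have hlevel : level x = K := mem_levelSet.1 hx
  obtain ⟨i, hi⟩ := exists_star_of_level_pos (x := x) (by omega)
  rw [SRmin_eq_inf' d hKM, hxmin]
  refine le_SR_of_le_SR_update d hi (fun b => cnt_pos d hvert _) fun b => ?_
  rw [SRmin_eq_inf' d (by omega)]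
  exact inf'_le _ (mem_levelSet.2 (by rw [level_update_some hi, hlevel]))

/-- If every vertex contains at least one instance, the minimum success
rate per level is monotonically increasing in the level. -/
theorem SRmin_mono (M N : ℕ) (hM : 0 < M) (hN : 0 < N)
    (d : Fin N → (Fin M → Bool) × Bool)
    (hvert : ∀ v : Fin M → Bool, 0 < cnt d (fun i => some (v i)))
    (K : ℕ) (hK1 : 1 ≤ K) (hKM : K ≤ M) :
    SRmin d (K - 1) ≤ SRmin d K :=
  SRmin_mono_general M N d hvert K hK1 hKM
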